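/- arXiv:1508.05503 — 7 statements merged into one kernel-verified Lean document; each statement's English description precedes it below -/
import Mathlib

section
/- For any fixed vector v ∈ ℝ^n, the quantity Σ_{i=1}^n v_i · ρ_i(≾) is maximised over all total preorders ≾ on {1,...,n} if and only if ≾ is contained in ≾_v, the total preorder induced by v (i.e., i ≾ j implies v_i ≤ v_j). -/
open scoped BigOperators

/-- A total preorder on `Fin n`: reflexive, transitive and total. -/
structure TotalPreorder (n : ℕ) where
  rel : Fin n → Fin n → Bool
  refl : ∀ i, rel i i = true
  trans : ∀ i j k, rel i j = true → rel j k = true → rel i k = true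
  total : ∀ i j, rel i j = true ∨ rel j i = true

namespace TotalPreorder

/-- The rank vector `ρ_i(≾) = Σ_j (1_{j ≾ i} − 1_{j ≿ i})`. -/
def rho {n : ℕ} (p : TotalPreorder n) (i : Fin n) : ℝ :=
  ∑ j, ((if p.rel j i then (1 : ℝ) else 0) - (if p.rel i j then (1 : ℝ) else 0))

/-- The total preorder induced by a vector `v`: `i ≾ j ↔ v i ≤ v j`. -/
noncomputable def induced {n : ℕ} (v : Fin n → ℝ) : TotalPreorder n where
  rel i j := decide (v i ≤ v j)
  refl i := by simp
  trans i j k := by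
    simp only [decide_eq_true_eq]
    exact le_trans
  total i j := by
    simp only [decide_eq_true_eq]
    exact le_total _ _

/-- `p` is contained in `q` if `i ≾_p j` implies `i ≾_q j`. -/
def contained {n : ℕ} (p q : TotalPreorder n) : Prop :=
  ∀ i j, p.rel i j = true → q.rel i j = true

end TotalPreorder

open TotalPreorder

/-- Expectation of a real-valued function of a binary random vector. -/
noncomputable def pexp {n : ℕ} (P : PMF (Fin n → Bool)) (f : (Fin n → Bool) → ℝ) : ℝ :=
  ∑ y : Fin n → Bool, (P y).toReal * f y

/-- The marginal functional: `M(P)_i = P[Y_i = 1]`. -/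
noncomputable def margin {n : ℕ} (P : PMF (Fin n → Bool)) (i : Fin n) : ℝ :=
  pexp P (fun y => if y i then 1 else 0)

/-- Membership in the weak rank functional `R*(P)`: a total preorder contained in
the preorder induced by the marginal means. -/
def RstarMem {n : ℕ} (P : PMF (Fin n → Bool)) (p : TotalPreorder n) : Prop :=
  p.contained (TotalPreorder.induced (margin P))

/-- Number of positive outcomes. -/
def n1 {n : ℕ} (y : Fin n → Bool) : ℕ := ∑ i, if y i then 1 else 0

/-- Number of negative outcomes. -/
def n0 {n : ℕ} (y : Fin n → Bool) : ℕ := n - n1 y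

/-- AUC weights `α_i(y)`. -/
noncomputable def alpha {n : ℕ} (y : Fin n → Bool) (i : Fin n) : ℝ :=
  if 0 < n1 y ∧ n1 y < n then (if y i then 1 else 0) / ((n0 y : ℝ) * (n1 y : ℝ)) else 0

/-- The empirical area under the ROC curve. -/
noncomputable def AUC {n : ℕ} (y : Fin n → Bool) (p : TotalPreorder n) : ℝ :=
  1 / 2 + 1 / 2 * ∑ i, alpha y i * rho p i

/-- `s` is an `R*`-proper scoring function for the family `F`. -/
def RStarProper {n : ℕ} (s : (Fin n → Bool) → TotalPreorder n → ℝ)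
    (F : Set (PMF (Fin n → Bool))) : Prop :=
  ∀ P ∈ F, ∀ p t : TotalPreorder n, RstarMem P t →
    pexp P (fun y => s y p) ≤ pexp P (fun y => s y t)

/-- `s` is a strictly `R*`-proper scoring function for the family `F`. -/
def StrictlyRStarProper {n : ℕ} (s : (Fin n → Bool) → TotalPreorder n → ℝ)
    (F : Set (PMF (Fin n → Bool))) : Prop :=
  ∀ P ∈ F, ∀ p t : TotalPreorder n, RstarMem P t →
    pexp P (fun y => s y p) ≤ pexp P (fun y => s y t) ∧
      (pexp P (fun y => s y p) = pexp P (fun y => s y t) ↔ RstarMem P p)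


section Aux

variable {n : ℕ}

lemma sum_rho_eq (v : Fin n → ℝ) (q : TotalPreorder n) :
    ∑ i, v i * rho q i
      = ∑ i, ∑ j, (v i - v j) * (if q.rel j i then (1:ℝ) else 0) := by
  simp only [rho, Finset.mul_sum, mul_sub, sub_mul, Finset.sum_sub_distrib]
  congr 1
  exact Finset.sum_comm

lemma term_le (v : Fin n → ℝ) (q : TotalPreorder n) (i j : Fin n) :
    (v i - v j) * (if q.rel j i then (1:ℝ) else 0) ≤ max 0 (v i - v j) := by
  by_cases h : q.rel j i <;> simp [h, le_max_left]

lemma sum_le_M (v : Fin n → ℝ) (q : TotalPreorder n) :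
    ∑ i, v i * rho q i ≤ ∑ i, ∑ j, max 0 (v i - v j) := by
  rw [sum_rho_eq]
  refine Finset.sum_le_sum fun i _ => Finset.sum_le_sum fun j _ => term_le v q i j

lemma contained_sum_eq (v : Fin n → ℝ) (q : TotalPreorder n)
    (h : q.contained (TotalPreorder.induced v)) :
    ∑ i, v i * rho q i = ∑ i, ∑ j, max 0 (v i - v j) := by
  rw [sum_rho_eq]
  refine Finset.sum_congr rfl fun i _ => Finset.sum_congr rfl fun j _ => ?_
  by_cases hji : q.rel j i
  · have : v j ≤ v i := by
      have := h j i hji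
      simpa [TotalPreorder.induced] using this
    simp [hji, max_eq_right (by linarith : (0:ℝ) ≤ v i - v j)]
  · have hij : q.rel i j := (q.total i j).resolve_right (by simpa using hji)
    have : v i ≤ v j := by
      have := h i j hij
      simpa [TotalPreorder.induced] using this
    simp [hji, max_eq_left (by linarith : v i - v j ≤ (0:ℝ))]

lemma induced_contained (v : Fin n → ℝ) :
    (TotalPreorder.induced v).contained (TotalPreorder.induced v) :=
  fun _ _ h => h

end Aux

/-- `Σ_i v_i ρ_i(≾)` is maximised over total preorders `≾`
if and only if `≾` is contained in the preorder induced by `v`. -/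
theorem rank_sum_maximised_iff_contained {n : ℕ} (v : Fin n → ℝ) (p : TotalPreorder n) :
    (∀ q : TotalPreorder n, ∑ i, v i * rho q i ≤ ∑ i, v i * rho p i) ↔
      p.contained (TotalPreorder.induced v) := by
  constructor
  · intro hmax
    by_contra hc
    simp only [TotalPreorder.contained] at hc
    push_neg at hc
    obtain ⟨i, j, hij, hnot⟩ := hc
    have hvlt : v j < v i := by
      simp only [TotalPreorder.induced, decide_eq_true_eq] at hnot
      exact lt_of_not_ge (by simpa using hnot)
    have hMeq : ∑ i, v i * rho (TotalPreorder.induced v) i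
        = ∑ i, ∑ j, max 0 (v i - v j) :=
      contained_sum_eq v _ (induced_contained v)
    have hlt : ∑ i, v i * rho p i < ∑ i, ∑ j, max 0 (v i - v j) := by
      rw [sum_rho_eq]
      refine Finset.sum_lt_sum (fun a _ => Finset.sum_le_sum fun b _ => term_le v p a b)
        ⟨j, Finset.mem_univ j, ?_⟩
      refine Finset.sum_lt_sum (fun b _ => term_le v p j b) ⟨i, Finset.mem_univ i, ?_⟩
      simp only [hij, if_true, mul_one]
      have : max 0 (v j - v i) = 0 := max_eq_left (by linarith)
      rw [this]; linarith
    have := hmax (TotalPreorder.induced v)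
    rw [hMeq] at this
    linarith
  · intro h q
    calc ∑ i, v i * rho q i ≤ ∑ i, ∑ j, max 0 (v i - v j) := sum_le_M v q
      _ = ∑ i, v i * rho p i := (contained_sum_eq v p h).symm
end

section
/- The Wilcoxon–Mann–Whitney function u(y, ≾) = (1/2)·n_0(y)·n_1(y) + (1/2)·Σ_{i=1}^n y_i·ρ_i(≾) is a strictly R*-proper scoring function for the family of all probability distributions on {0,1}^n: for every distribution P on {0,1}^n and every total preorder ≾ on {1,...,n}, E_P[u(Y, ≾)] ≤ E_P[u(Y, t)] for all t ∈ R*(P), with equality if and only if ≾ ∈ R*(P). -/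
open scoped BigOperators

open TotalPreorder

section Aux

variable {n : ℕ}

/-- Pairwise term in the symmetrized score sum. -/
noncomputable def Hm (m : Fin n → ℝ) (p : TotalPreorder n) (ij : Fin n × Fin n) : ℝ :=
  (m ij.1 - m ij.2) *
    ((if p.rel ij.2 ij.1 then (1 : ℝ) else 0) - (if p.rel ij.1 ij.2 then (1 : ℝ) else 0))

lemma S_eq (m : Fin n → ℝ) (p : TotalPreorder n) :
    ∑ i, m i * rho p i = 1 / 2 * ∑ ij : Fin n × Fin n, Hm m p ij := by
  have h1 : ∑ i, m i * rho p i
      = ∑ ij : Fin n × Fin n, m ij.1 *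
        ((if p.rel ij.2 ij.1 then (1 : ℝ) else 0) - (if p.rel ij.1 ij.2 then (1 : ℝ) else 0)) := by
    rw [Fintype.sum_prod_type]
    simp only [rho, Finset.mul_sum]
  have h2 : ∑ ij : Fin n × Fin n, m ij.1 *
        ((if p.rel ij.2 ij.1 then (1 : ℝ) else 0) - (if p.rel ij.1 ij.2 then (1 : ℝ) else 0))
      = ∑ ij : Fin n × Fin n, m ij.2 *
        ((if p.rel ij.1 ij.2 then (1 : ℝ) else 0) - (if p.rel ij.2 ij.1 then (1 : ℝ) else 0)) := by
    exact Fintype.sum_equiv (Equiv.prodComm _ _) _ _ (fun ij => rfl)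
  have h3 : ∑ ij : Fin n × Fin n, Hm m p ij
      = (∑ ij : Fin n × Fin n, m ij.1 *
          ((if p.rel ij.2 ij.1 then (1 : ℝ) else 0) - (if p.rel ij.1 ij.2 then (1 : ℝ) else 0)))
        + ∑ ij : Fin n × Fin n, m ij.2 *
          ((if p.rel ij.1 ij.2 then (1 : ℝ) else 0) - (if p.rel ij.2 ij.1 then (1 : ℝ) else 0)) := by
    rw [← Finset.sum_add_distrib]
    refine Finset.sum_congr rfl fun ij _ => ?_
    unfold Hm; ring
  rw [h1, h3, ← h2]; ring

lemma Hm_le_abs (m : Fin n → ℝ) (p : TotalPreorder n) (ij : Fin n × Fin n) :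
    Hm m p ij ≤ |m ij.1 - m ij.2| := by
  unfold Hm
  set d := m ij.1 - m ij.2 with hd
  have h1 := le_abs_self d
  have h2 := neg_abs_le d
  have h3 := abs_nonneg d
  split_ifs <;> nlinarith

lemma Hm_of_contained (m : Fin n → ℝ) (p : TotalPreorder n)
    (hp : p.contained (TotalPreorder.induced m)) (ij : Fin n × Fin n) :
    Hm m p ij = |m ij.1 - m ij.2| := by
  obtain ⟨i, j⟩ := ij
  have hle : ∀ a b : Fin n, p.rel a b = true → m a ≤ m b := by
    intro a b hab
    have := hp a b hab
    simpa [TotalPreorder.induced] using this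
  rcases lt_trichotomy (m i) (m j) with h | h | h
  · have hji : p.rel j i = false := by
      by_contra hc
      have : p.rel j i = true := by simpa using hc
      exact absurd (hle j i this) (not_le.mpr h)
    have hij : p.rel i j = true := (p.total i j).resolve_right (by simp [hji])
    simp only [Hm, hji, hij]
    norm_num
    rw [abs_of_neg (by linarith : m i - m j < 0)]
    ring
  · simp [Hm, h]
  · have hij : p.rel i j = false := by
      by_contra hc
      have : p.rel i j = true := by simpa using hc
      exact absurd (hle i j this) (not_le.mpr h)
    have hji : p.rel j i = true := (p.total i j).resolve_left (by simp [hij])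
    simp only [Hm, hji, hij]
    norm_num
    rw [abs_of_pos (by linarith : (0:ℝ) < m i - m j)]

lemma contained_of_Hm (m : Fin n → ℝ) (p : TotalPreorder n)
    (h : ∀ ij : Fin n × Fin n, Hm m p ij = |m ij.1 - m ij.2|) :
    p.contained (TotalPreorder.induced m) := by
  intro i j hij
  show decide (m i ≤ m j) = true
  rw [decide_eq_true_eq]
  by_contra hlt
  push_neg at hlt
  have H := h (i, j)
  have habs : |m i - m j| = m i - m j := abs_of_pos (by linarith)
  simp only [Hm, hij, if_true] at H
  cases hji : p.rel j i <;> simp [hji] at H <;> rw [habs] at H <;> linarith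

lemma pexp_expand (P : PMF (Fin n → Bool)) (p : TotalPreorder n) :
    pexp P (fun y => 1 / 2 * (n0 y : ℝ) * (n1 y : ℝ)
        + 1 / 2 * ∑ i, (if y i then (1 : ℝ) else 0) * rho p i)
      = pexp P (fun y => 1 / 2 * (n0 y : ℝ) * (n1 y : ℝ))
        + 1 / 2 * ∑ i, margin P i * rho p i := by
  unfold pexp margin pexp
  have step1 : ∀ y : Fin n → Bool,
      (P y).toReal * (1 / 2 * (n0 y : ℝ) * (n1 y : ℝ)
          + 1 / 2 * ∑ i, (if y i then (1 : ℝ) else 0) * rho p i)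
        = (P y).toReal * (1 / 2 * (n0 y : ℝ) * (n1 y : ℝ))
          + ∑ i, (P y).toReal * (if y i then (1 : ℝ) else 0) * (1 / 2 * rho p i) := by
    intro y
    rw [mul_add]
    congr 1
    rw [Finset.mul_sum, Finset.mul_sum]
    exact Finset.sum_congr rfl fun i _ => by ring
  simp_rw [step1]
  rw [Finset.sum_add_distrib]
  congr 1
  rw [Finset.sum_comm (s := (Finset.univ : Finset (Fin n → Bool)))
    (t := (Finset.univ : Finset (Fin n)))
    (f := fun y i => (P y).toReal * (if y i then (1:ℝ) else 0) * (1 / 2 * rho p i))]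
  rw [Finset.mul_sum]
  refine Finset.sum_congr rfl fun i _ => ?_
  rw [← Finset.sum_mul]
  ring

end Aux

/-- the Wilcoxon–Mann–Whitney function `u` is a strictly `R*`-proper
scoring function for the family of all distributions on `{0,1}^n`. -/
theorem wmw_strictly_Rstar_proper {n : ℕ} :
    StrictlyRStarProper
      (fun (y : Fin n → Bool) (p : TotalPreorder n) =>
        1 / 2 * (n0 y : ℝ) * (n1 y : ℝ) + 1 / 2 * ∑ i, (if y i then (1 : ℝ) else 0) * rho p i)
      Set.univ := by
  intro P _ p t ht
  set m := margin P with hm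
  have Ht : ∀ ij : Fin n × Fin n, Hm m t ij = |m ij.1 - m ij.2| :=
    Hm_of_contained m t ht
  have hpair : ∀ ij ∈ (Finset.univ : Finset (Fin n × Fin n)), Hm m p ij ≤ Hm m t ij := by
    intro ij _
    rw [Ht ij]
    exact Hm_le_abs m p ij
  have hsum : ∑ ij : Fin n × Fin n, Hm m p ij ≤ ∑ ij : Fin n × Fin n, Hm m t ij :=
    Finset.sum_le_sum hpair
  have hexp : ∀ q : TotalPreorder n,
      pexp P (fun y => 1 / 2 * (n0 y : ℝ) * (n1 y : ℝ)
          + 1 / 2 * ∑ i, (if y i then (1 : ℝ) else 0) * rho q i)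
        = pexp P (fun y => 1 / 2 * (n0 y : ℝ) * (n1 y : ℝ))
          + 1 / 2 * (1 / 2 * ∑ ij : Fin n × Fin n, Hm m q ij) := by
    intro q
    rw [pexp_expand P q, ← S_eq m q]
  constructor
  · rw [hexp p, hexp t]
    linarith
  · rw [hexp p, hexp t]
    constructor
    · intro heq
      have hsums : ∑ ij : Fin n × Fin n, Hm m p ij = ∑ ij : Fin n × Fin n, Hm m t ij := by
        linarith
      have hterm := (Finset.sum_eq_sum_iff_of_le hpair).mp hsums
      exact contained_of_Hm m p fun ij => by rw [hterm ij (Finset.mem_univ ij), Ht ij]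
    · intro hp
      have : ∀ ij : Fin n × Fin n, Hm m p ij = Hm m t ij := fun ij => by
        rw [Hm_of_contained m p hp ij, Ht ij]
      rw [Finset.sum_congr rfl fun ij _ => this ij]
end

section
/- Let P be the probability distribution on {0,1}^4 with P(1,1,0,0) = 1/2, P(0,0,1,0) = 7/16, P(0,0,0,1) = 1/16, and probability zero elsewhere. Let ≾_P be the total preorder on {1,2,3,4} induced by the marginal means E_P[Y] = (1/2, 1/2, 7/16, 1/16), and let ≾_α be the total preorder induced by E_P[α(Y)] = (1/8, 1/8, 7/48, 1/48). Then ρ(≾_P) = (2, 2, −1, −3), ρ(≾_α) = (0, 0, 3, −3), and the expected empirical AUCs satisfy E_P[AUC(Y, ≾_P)] = 31/48 < E_P[AUC(Y, ≾_α)] = 33/48. In particular, the AUC is not an R*-proper scoring function for the family of all distributions on {0,1}^4. -/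
open scoped BigOperators

open TotalPreorder

/-!
Expectation is linear, so `E_P[AUC(Y, ≾)] = 1/2 + 1/2 · Σ_i E_P[α_i(Y)] ρ_i(≾)`: the expected
AUC rewards ranking along the expected weights `E_P[α(Y)]`, not along the marginal means. The two
orders can differ because `α` weights a positive by `1/(n₀ n₁)`, which is largest when it is the
only positive. Here item 3 has a smaller mean than items 1 and 2 but a larger expected weight,
and ranking it on top raises the expected AUC from `31/48` to `33/48`.
-/

lemma PMF.sum_toReal_eq_one {α : Type*} [Fintype α] (P : PMF α) : ∑ a, (P a).toReal = 1 := by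
  rw [← ENNReal.toReal_sum fun a _ => P.apply_ne_top a, ← tsum_fintype (L := .unconditional _),
    P.tsum_coe, ENNReal.toReal_one]

lemma pexp_eq_sum_of_support_subset {n : ℕ} (P : PMF (Fin n → Bool))
    (S : Finset (Fin n → Bool)) (hS : ∀ y ∉ S, P y = 0) (f : (Fin n → Bool) → ℝ) :
    pexp P f = ∑ y ∈ S, (P y).toReal * f y :=
  (Finset.sum_subset (Finset.subset_univ S) fun y _ hy => by simp [hS y hy]).symm

lemma pexp_AUC {n : ℕ} (P : PMF (Fin n → Bool)) (p : TotalPreorder n) :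
    pexp P (fun y => AUC y p) = 1 / 2 + 1 / 2 * ∑ i, pexp P (fun y => alpha y i) * rho p i := by
  simp only [pexp, AUC, mul_add, Finset.sum_add_distrib, Finset.mul_sum, Finset.sum_mul]
  rw [Finset.sum_comm, ← Finset.sum_mul, P.sum_toReal_eq_one, one_mul]
  exact congrArg _ <| Finset.sum_congr rfl fun i _ => Finset.sum_congr rfl fun y _ => by ring

lemma rstarMem_induced_margin {n : ℕ} (P : PMF (Fin n → Bool)) :
    RstarMem P (induced (margin P)) :=
  fun _ _ h => h

lemma not_rStarProper_of_lt {n : ℕ} {s : (Fin n → Bool) → TotalPreorder n → ℝ}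
    {F : Set (PMF (Fin n → Bool))} {P : PMF (Fin n → Bool)} (hP : P ∈ F) (p : TotalPreorder n)
    (h : pexp P (fun y => s y (induced (margin P))) < pexp P (fun y => s y p)) :
    ¬ RStarProper s F :=
  fun hs => (hs P hP p _ (rstarMem_induced_margin P)).not_gt h

lemma rho_induced {n : ℕ} (v : Fin n → ℝ) (i : Fin n) :
    rho (induced v) i = ∑ j, ((if v j ≤ v i then 1 else 0) - (if v i ≤ v j then 1 else 0)) := by
  simp [rho, induced]

lemma rho_induced_marginal_means :
    rho (induced ![1 / 2, 1 / 2, 7 / 16, 1 / 16]) = ![2, 2, -1, -3] := by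
  funext i
  rw [rho_induced, Fin.sum_univ_four]
  fin_cases i <;> norm_num [Matrix.cons_val_two, Matrix.cons_val_three]

lemma rho_induced_expected_weights :
    rho (induced ![1 / 8, 1 / 8, 7 / 48, 1 / 48]) = ![0, 0, 3, -3] := by
  funext i
  rw [rho_induced, Fin.sum_univ_four]
  fin_cases i <;> norm_num [Matrix.cons_val_two, Matrix.cons_val_three]

section ThreePoint

variable {P : PMF (Fin 4 → Bool)}

lemma pexp_eq_of_apply_eq (h1 : P ![true, true, false, false] = 1 / 2)
    (h2 : P ![false, false, true, false] = 7 / 16)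
    (h3 : P ![false, false, false, true] = 1 / 16)
    (h0 : ∀ y : Fin 4 → Bool, y ≠ ![true, true, false, false] →
      y ≠ ![false, false, true, false] → y ≠ ![false, false, false, true] → P y = 0)
    (f : (Fin 4 → Bool) → ℝ) :
    pexp P f = 1 / 2 * f ![true, true, false, false] + 7 / 16 * f ![false, false, true, false]
      + 1 / 16 * f ![false, false, false, true] := by
  have hS : ∀ y ∉ ({![true, true, false, false], ![false, false, true, false],
      ![false, false, false, true]} : Finset (Fin 4 → Bool)), P y = 0 := by
    intro y hy
    simp only [Finset.mem_insert, Finset.mem_singleton, not_or] at hy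
    exact h0 y hy.1 hy.2.1 hy.2.2
  rw [pexp_eq_sum_of_support_subset P _ hS, Finset.sum_insert (by decide),
    Finset.sum_insert (by decide), Finset.sum_singleton, h1, h2, h3]
  norm_num [ENNReal.toReal_div]
  ring

lemma margin_eq_of_pexp_eq (hP : ∀ f, pexp P f = 1 / 2 * f ![true, true, false, false]
      + 7 / 16 * f ![false, false, true, false] + 1 / 16 * f ![false, false, false, true]) :
    margin P = ![1 / 2, 1 / 2, 7 / 16, 1 / 16] := by
  funext i
  rw [margin, hP]
  fin_cases i <;> norm_num [Matrix.cons_val_two, Matrix.cons_val_three]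

lemma pexp_alpha_eq_of_pexp_eq (hP : ∀ f, pexp P f = 1 / 2 * f ![true, true, false, false]
      + 7 / 16 * f ![false, false, true, false] + 1 / 16 * f ![false, false, false, true]) :
    (fun i => pexp P (fun y => alpha y i)) = ![1 / 8, 1 / 8, 7 / 48, 1 / 48] := by
  have hA : n1 ![true, true, false, false] = 2 := by decide
  have hB : n1 ![false, false, true, false] = 1 := by decide
  have hC : n1 ![false, false, false, true] = 1 := by decide
  funext i
  rw [hP]
  fin_cases i <;> norm_num [alpha, n0, hA, hB, hC]

end ThreePoint

/-- counter-example showing AUC is not `R*`-proper. -/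
theorem auc_counterexample (P : PMF (Fin 4 → Bool))
    (h1 : P ![true, true, false, false] = 1 / 2)
    (h2 : P ![false, false, true, false] = 7 / 16)
    (h3 : P ![false, false, false, true] = 1 / 16)
    (h0 : ∀ y : Fin 4 → Bool, y ≠ ![true, true, false, false] →
      y ≠ ![false, false, true, false] → y ≠ ![false, false, false, true] → P y = 0) :
    margin P = ![1 / 2, 1 / 2, 7 / 16, 1 / 16] ∧
    (fun i => pexp P (fun y => alpha y i)) = ![1 / 8, 1 / 8, 7 / 48, 1 / 48] ∧
    rho (TotalPreorder.induced (margin P)) = ![2, 2, -1, -3] ∧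
    rho (TotalPreorder.induced (fun i => pexp P (fun y => alpha y i))) = ![0, 0, 3, -3] ∧
    pexp P (fun y => AUC y (TotalPreorder.induced (margin P))) = 31 / 48 ∧
    pexp P (fun y => AUC y (TotalPreorder.induced (fun i => pexp P (fun y => alpha y i))))
      = 33 / 48 ∧
    ¬ RStarProper (fun (y : Fin 4 → Bool) p => AUC y p) Set.univ := by
  have hP := pexp_eq_of_apply_eq h1 h2 h3 h0
  have hm := margin_eq_of_pexp_eq hP
  have hα := pexp_alpha_eq_of_pexp_eq hP
  have hAUCm : pexp P (fun y => AUC y (induced (margin P))) = 31 / 48 := by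
    rw [pexp_AUC, hm, rho_induced_marginal_means]
    norm_num [congrFun hα, Fin.sum_univ_four, Matrix.cons_val_two, Matrix.cons_val_three]
  have hAUCα :
      pexp P (fun y => AUC y (induced (fun i => pexp P (fun y => alpha y i)))) = 33 / 48 := by
    rw [pexp_AUC, hα, rho_induced_expected_weights]
    norm_num [congrFun hα, Fin.sum_univ_four, Matrix.cons_val_two, Matrix.cons_val_three]
  refine ⟨hm, hα, hm ▸ rho_induced_marginal_means, hα ▸ rho_induced_expected_weights,
    hAUCm, hAUCα, ?_⟩
  exact not_rStarProper_of_lt (Set.mem_univ P) (induced fun i => pexp P fun y => alpha y i)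
    (by rw [hAUCm, hAUCα]; norm_num)
end

section
/- For any y ∈ {0,1}^n with n ≥ 2 and any pair of distinct indices i, j, the AUC weights satisfy α_i(y) − α_j(y) = (y_i − y_j) / ((1 + n_0^{¬(i,j)}(y))·(1 + n_1^{¬(i,j)}(y))), where n_1^{¬(i,j)}(y) = Σ_{k ≠ i,j} y_k and n_0^{¬(i,j)}(y) = (n − 2) − n_1^{¬(i,j)}(y). -/
open scoped BigOperators

open TotalPreorder

/-- difference of AUC weights. -/
theorem alpha_diff {n : ℕ} (hn : 2 ≤ n) (y : Fin n → Bool) (i j : Fin n) (hij : i ≠ j) :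
    alpha y i - alpha y j =
      ((if y i then (1 : ℝ) else 0) - (if y j then (1 : ℝ) else 0)) /
        ((1 + ((((n - 2 : ℕ) : ℝ)) - ∑ k ∈ (Finset.univ.erase i).erase j,
            (if y k then (1 : ℝ) else 0))) *
          (1 + ∑ k ∈ (Finset.univ.erase i).erase j, (if y k then (1 : ℝ) else 0))) := by
  classical
  set f : Fin n → ℝ := fun k => if y k then (1 : ℝ) else 0 with hf
  set S : ℝ := ∑ k ∈ (Finset.univ.erase i).erase j, f k with hS
  have hjmem : j ∈ Finset.univ.erase i := Finset.mem_erase.mpr ⟨hij.symm, Finset.mem_univ j⟩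
  have hsum : (n1 y : ℝ) = f i + f j + S := by
    have h1 : (n1 y : ℝ) = ∑ k, f k := by
      simp [n1, hf]
    rw [h1, ← Finset.add_sum_erase _ f (Finset.mem_univ i),
        ← Finset.add_sum_erase _ f hjmem]
    ring
  have hn2 : ((n - 2 : ℕ) : ℝ) = (n : ℝ) - 2 := by
    have := Nat.cast_sub (R := ℝ) hn
    push_cast at this ⊢
    linarith
  have hn1le : n1 y ≤ n := by
    have : n1 y ≤ ∑ _k : Fin n, 1 := Finset.sum_le_sum (fun k _ => by split <;> omega)
    simpa using this
  -- case split
  by_cases hyi : y i = true <;> by_cases hyj : y j = true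
  · -- both true: difference 0
    have : alpha y i = alpha y j := by
      simp [alpha, hyi, hyj]
    rw [this]
    simp [hyi, hyj]
  · have hyj' : y j = false := by simpa using hyj
    -- y i true, y j false
    have h1 : 1 ≤ n1 y := by
      have : (if y i then 1 else 0) ≤ n1 y :=
        Finset.single_le_sum (f := fun k => if y k then 1 else 0) (fun k _ => Nat.zero_le _)
          (Finset.mem_univ i)
      simpa [hyi] using this
    have h2 : n1 y < n := by
      rcases lt_or_eq_of_le hn1le with h | h
      · exact h
      · exfalso
        have : (if y j then 1 else 0 : ℕ) + ∑ k ∈ Finset.univ.erase j, (if y k then 1 else 0) = n1 y := by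
          rw [Finset.add_sum_erase _ (fun k => if y k then (1:ℕ) else 0) (Finset.mem_univ j)]; rfl
        have hb : ∑ k ∈ Finset.univ.erase j, (if y k then (1:ℕ) else 0) ≤ (Finset.univ.erase j).card :=
          Finset.sum_le_card_nsmul _ _ 1 (fun k _ => by split <;> omega) |>.trans (by simp)
        simp [hyj'] at this
        rw [Finset.card_erase_of_mem (Finset.mem_univ j)] at hb
        simp at hb
        omega
    have hcond : 0 < n1 y ∧ n1 y < n := ⟨h1, h2⟩
    have hn0 : (n0 y : ℝ) = (n : ℝ) - (n1 y : ℝ) := by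
      have := Nat.cast_sub (R := ℝ) (le_of_lt h2)
      simpa [n0] using this
    have hSval : S = (n1 y : ℝ) - 1 := by
      have := hsum
      simp [hf, hyi, hyj'] at this
      linarith
    have hnum : (if y i then (1:ℝ) else 0) - (if y j then (1:ℝ) else 0) = 1 := by
      simp [hyi, hyj']
    rw [hnum]
    have h1' : (1:ℝ) ≤ (n1 y : ℝ) := by exact_mod_cast h1
    have h2' : (n1 y : ℝ) < (n : ℝ) := by exact_mod_cast h2
    rw [alpha, alpha, if_pos hcond, if_pos hcond]
    simp only [hyi, hyj', if_true, if_false]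
    rw [hSval, hn0, hn2]
    have e1 : (1 + ((n:ℝ) - 2 - ((n1 y : ℝ) - 1))) = (n:ℝ) - (n1 y : ℝ) := by ring
    have e2 : (1 + ((n1 y : ℝ) - 1)) = (n1 y : ℝ) := by ring
    rw [e1, e2]
    norm_num
  · have hyi' : y i = false := by simpa using hyi
    -- y i false, y j true : symmetric
    have h1 : 1 ≤ n1 y := by
      have : (if y j then 1 else 0) ≤ n1 y :=
        Finset.single_le_sum (f := fun k => if y k then 1 else 0) (fun k _ => Nat.zero_le _)
          (Finset.mem_univ j)
      simpa [hyj] using this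
    have h2 : n1 y < n := by
      rcases lt_or_eq_of_le hn1le with h | h
      · exact h
      · exfalso
        have : (if y i then 1 else 0 : ℕ) + ∑ k ∈ Finset.univ.erase i, (if y k then 1 else 0) = n1 y := by
          rw [Finset.add_sum_erase _ (fun k => if y k then (1:ℕ) else 0) (Finset.mem_univ i)]; rfl
        have hb : ∑ k ∈ Finset.univ.erase i, (if y k then (1:ℕ) else 0) ≤ (Finset.univ.erase i).card :=
          Finset.sum_le_card_nsmul _ _ 1 (fun k _ => by split <;> omega) |>.trans (by simp)
        simp [hyi'] at this
        rw [Finset.card_erase_of_mem (Finset.mem_univ i)] at hb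
        simp at hb
        omega
    have hcond : 0 < n1 y ∧ n1 y < n := ⟨h1, h2⟩
    have hn0 : (n0 y : ℝ) = (n : ℝ) - (n1 y : ℝ) := by
      have := Nat.cast_sub (R := ℝ) (le_of_lt h2)
      simpa [n0] using this
    have hSval : S = (n1 y : ℝ) - 1 := by
      have := hsum
      simp [hf, hyi', hyj] at this
      linarith
    have hnum : (if y i then (1:ℝ) else 0) - (if y j then (1:ℝ) else 0) = -1 := by
      simp [hyi', hyj]
    rw [hnum]
    rw [alpha, alpha, if_pos hcond, if_pos hcond]
    simp only [hyi', hyj, if_true, if_false]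
    rw [hSval, hn0, hn2]
    have e1 : (1 + ((n:ℝ) - 2 - ((n1 y : ℝ) - 1))) = (n:ℝ) - (n1 y : ℝ) := by ring
    have e2 : (1 + ((n1 y : ℝ) - 1)) = (n1 y : ℝ) := by ring
    rw [e1, e2]
    norm_num [neg_div]
  · -- both false
    have hyi' : y i = false := by simpa using hyi
    have hyj' : y j = false := by simpa using hyj
    have : alpha y i = alpha y j := by simp [alpha, hyi', hyj']
    rw [this]
    simp [hyi', hyj']
end

section
/- Let Y = (Y_1, ..., Y_n) be a random vector in {0,1}^n whose coordinates are mutually independent under P. Then for any distinct indices i, j, E_P[α_i(Y)] − E_P[α_j(Y)] = (E_P[Y_i] − E_P[Y_j]) · E_P[ 1 / ((1 + n_0^{¬(i,j)}(Y))·(1 + n_1^{¬(i,j)}(Y))) ], and since the latter expectation is strictly positive, E_P[α_i(Y)] ≤ E_P[α_j(Y)] if and only if E_P[Y_i] ≤ E_P[Y_j]. -/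
open scoped BigOperators

open TotalPreorder

lemma sum_comp_involutive {β : Type*} [Fintype β] (f : β → β)
    (hf : Function.Involutive f) (F : β → ℝ) :
    ∑ y, F (f y) = ∑ y, F y :=
  Fintype.sum_bijective f hf.bijective _ _ (fun _ => rfl)

lemma flip_invol {n : ℕ} (i : Fin n) :
    Function.Involutive (fun y : Fin n → Bool => Function.update y i (!(y i))) := by
  intro y; funext k
  rcases eq_or_ne k i with rfl | hk
  · simp
  · simp [Function.update_of_ne hk]

lemma swap_invol {n : ℕ} {i j : Fin n} (hij : i ≠ j) :
    Function.Involutive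
      (fun y : Fin n → Bool => Function.update (Function.update y i (y j)) j (y i)) := by
  intro y; funext k
  simp only [Function.update_apply]
  split_ifs <;> simp_all

lemma key_sum {n : ℕ} (i j : Fin n) (hij : i ≠ j)
    (w : Fin n → Bool → ℝ) (hw : ∀ k, w k true + w k false = 1)
    (g : (Fin n → Bool) → ℝ)
    (hgi : ∀ y b, g (Function.update y i b) = g y)
    (hgj : ∀ y b, g (Function.update y j b) = g y) :
    ∑ y : Fin n → Bool, (∏ k, w k (y k)) *
        (((if y i then (1:ℝ) else 0) - (if y j then 1 else 0)) * g y)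
      = (w i true - w j true) *
        ∑ y : Fin n → Bool, (∏ k, w k (y k)) * g y := by
  classical
  have hjmem : j ∈ Finset.univ.erase i := Finset.mem_erase.2 ⟨hij.symm, Finset.mem_univ j⟩
  set S : Finset (Fin n) := (Finset.univ.erase i).erase j with hS
  have hki : ∀ k ∈ S, k ≠ i := fun k hk => (Finset.mem_erase.1 (Finset.mem_erase.1 hk).2).1
  have hkj : ∀ k ∈ S, k ≠ j := fun k hk => (Finset.mem_erase.1 hk).1
  set Q : (Fin n → Bool) → ℝ := fun y => ∏ k ∈ S, w k (y k) with hQ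
  set A : (Fin n → Bool) → ℝ :=
    fun y => (if y i then (1:ℝ) else 0) - (if y j then 1 else 0) with hA
  have hW : ∀ y : Fin n → Bool, (∏ k, w k (y k)) = w i (y i) * (w j (y j) * Q y) := by
    intro y
    rw [← Finset.mul_prod_erase Finset.univ (fun k => w k (y k)) (Finset.mem_univ i),
        ← Finset.mul_prod_erase (Finset.univ.erase i) (fun k => w k (y k)) hjmem]
  -- invariance of Q under updates at i, j
  have hQu : ∀ (y : Fin n → Bool) (a : Fin n) (b : Bool), (a = i ∨ a = j) →
      Q (Function.update y a b) = Q y := by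
    intro y a b ha
    refine Finset.prod_congr rfl fun k hk => ?_
    have : k ≠ a := by rcases ha with rfl | rfl; exacts [hki k hk, hkj k hk]
    rw [Function.update_of_ne this]
  -- the swap
  set σ : (Fin n → Bool) → (Fin n → Bool) :=
    fun y => Function.update (Function.update y i (y j)) j (y i) with hσdef
  have hσ := swap_invol (n := n) hij
  have hσi : ∀ y, σ y i = y j := by
    intro y; simp [hσdef, Function.update_of_ne hij, Function.update_self]
  have hσj : ∀ y, σ y j = y i := by
    intro y; simp [hσdef, Function.update_self]
  have hQσ : ∀ y, Q (σ y) = Q y := by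
    intro y
    have h1 := hQu (Function.update y i (y j)) j (y i) (Or.inr rfl)
    have h2 := hQu y i (y j) (Or.inl rfl)
    simpa [hσdef, h2] using h1
  have hgσ : ∀ y, g (σ y) = g y := by
    intro y
    have h1 := hgj (Function.update y i (y j)) (y i)
    simpa [hσdef, hgi y (y j)] using h1
  -- flips
  set τi : (Fin n → Bool) → (Fin n → Bool) := fun y => Function.update y i (!(y i)) with hτi
  set τj : (Fin n → Bool) → (Fin n → Bool) := fun y => Function.update y j (!(y j)) with hτj
  have hτii : ∀ y, τi y i = !(y i) := by intro y; simp [hτi]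
  have hτij : ∀ y, τi y j = y j := by
    intro y; simp [hτi, Function.update_of_ne (Ne.symm hij)]
  have hτji : ∀ y, τj y i = y i := by
    intro y; simp [hτj, Function.update_of_ne hij]
  have hτjj : ∀ y, τj y j = !(y j) := by intro y; simp [hτj]
  have hQτi : ∀ y, Q (τi y) = Q y := fun y => hQu y i _ (Or.inl rfl)
  have hQτj : ∀ y, Q (τj y) = Q y := fun y => hQu y j _ (Or.inr rfl)
  have hgτi : ∀ y, g (τi y) = g y := fun y => hgi y _
  have hgτj : ∀ y, g (τj y) = g y := fun y => hgj y _
  -- abbreviations for values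
  set U : ℝ := ∑ y : Fin n → Bool, Q y * g y with hU
  -- Step C : ∑ W g = U/4
  have stepj : ∑ y : Fin n → Bool, w j (y j) * Q y * g y = U / 2 := by
    have h1 : ∑ y : Fin n → Bool, w j (y j) * Q y * g y
        = ∑ y : Fin n → Bool, w j (!(y j)) * Q y * g y := by
      rw [← sum_comp_involutive τj (flip_invol j)
        (fun y => w j (y j) * Q y * g y)]
      refine Finset.sum_congr rfl fun y _ => ?_
      rw [hτjj, hQτj, hgτj]
    have h2 : ∀ b : Bool, w j b + w j (!b) = 1 := by
      intro b; cases b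
      · simpa [add_comm] using hw j
      · simpa using hw j
    have : (∑ y : Fin n → Bool, w j (y j) * Q y * g y)
        + ∑ y : Fin n → Bool, w j (y j) * Q y * g y = U := by
      nth_rewrite 2 [h1]
      rw [← Finset.sum_add_distrib, hU]
      refine Finset.sum_congr rfl fun y _ => ?_
      linear_combination (Q y * g y) * h2 (y j)
    linarith
  have stepW : ∑ y : Fin n → Bool, (∏ k, w k (y k)) * g y = U / 4 := by
    have h1 : ∑ y : Fin n → Bool, (∏ k, w k (y k)) * g y
        = ∑ y : Fin n → Bool, w i (y i) * (w j (y j) * Q y) * g y := by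
      refine Finset.sum_congr rfl fun y _ => by rw [hW]
    have h2 : ∑ y : Fin n → Bool, w i (y i) * (w j (y j) * Q y) * g y
        = ∑ y : Fin n → Bool, w i (!(y i)) * (w j (y j) * Q y) * g y := by
      rw [← sum_comp_involutive τi (flip_invol i)
        (fun y => w i (y i) * (w j (y j) * Q y) * g y)]
      refine Finset.sum_congr rfl fun y _ => ?_
      rw [hτii, hτij, hQτi, hgτi]
    have h3 : ∀ b : Bool, w i b + w i (!b) = 1 := by
      intro b; cases b
      · simpa [add_comm] using hw i
      · simpa using hw i
    have h4 : (∑ y : Fin n → Bool, w i (y i) * (w j (y j) * Q y) * g y)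
        + ∑ y : Fin n → Bool, w i (y i) * (w j (y j) * Q y) * g y
        = ∑ y : Fin n → Bool, w j (y j) * Q y * g y := by
      nth_rewrite 2 [h2]
      rw [← Finset.sum_add_distrib]
      refine Finset.sum_congr rfl fun y _ => ?_
      linear_combination (w j (y j) * Q y * g y) * h3 (y i)
    rw [h1]; rw [stepj] at h4; linarith
  -- Step B : ∑ Q A² g = U/2
  have stepB : ∑ y : Fin n → Bool, Q y * ((A y)^2 * g y) = U / 2 := by
    have h1 : ∑ y : Fin n → Bool, Q y * ((A y)^2 * g y)
        = ∑ y : Fin n → Bool, Q y * ((1 - (A y)^2) * g y) := by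
      rw [← sum_comp_involutive τi (flip_invol i)
        (fun y => Q y * ((A y)^2 * g y))]
      refine Finset.sum_congr rfl fun y _ => ?_
      rw [hQτi, hgτi]
      have hAτ : (A (τi y))^2 = 1 - (A y)^2 := by
        simp only [hA, hτii y, hτij y]
        cases hb : y i <;> cases hc : y j <;> norm_num
      rw [hAτ]
    have : (∑ y : Fin n → Bool, Q y * ((A y)^2 * g y))
        + ∑ y : Fin n → Bool, Q y * ((A y)^2 * g y) = U := by
      nth_rewrite 2 [h1]
      rw [← Finset.sum_add_distrib, hU]
      refine Finset.sum_congr rfl fun y _ => by ring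
    linarith
  -- Step A : main antisymmetrization
  have hAσ : ∀ y, A (σ y) = - A y := by
    intro y; simp only [hA, hσi y, hσj y]; ring
  have stepA : (∑ y : Fin n → Bool, (∏ k, w k (y k)) * (A y * g y))
      + ∑ y : Fin n → Bool, (∏ k, w k (y k)) * (A y * g y)
      = (w i true - w j true) * ∑ y : Fin n → Bool, Q y * ((A y)^2 * g y) := by
    have h1 : ∑ y : Fin n → Bool, (∏ k, w k (y k)) * (A y * g y)
        = ∑ y : Fin n → Bool, w i (y j) * (w j (y i) * Q y) * (-(A y) * g y) := by
      rw [← sum_comp_involutive σ hσ (fun y => (∏ k, w k (y k)) * (A y * g y))]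
      refine Finset.sum_congr rfl fun y _ => ?_
      rw [hW, hσi, hσj, hQσ, hgσ, hAσ]
    nth_rewrite 2 [h1]
    rw [← Finset.sum_add_distrib, Finset.mul_sum]
    refine Finset.sum_congr rfl fun y _ => ?_
    have hkey : ∀ a b : Bool,
        w i a * (w j b * Q y) * (((if a then (1:ℝ) else 0) - if b then 1 else 0) * g y)
        + w i b * (w j a * Q y) * (-(((if a then (1:ℝ) else 0) - if b then 1 else 0)) * g y)
        = (w i true - w j true) *
          (Q y * ((((if a then (1:ℝ) else 0) - if b then 1 else 0))^2 * g y)) := by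
      intro a b
      cases a <;> cases b
      · norm_num
      · norm_num
        first
        | linear_combination 2 * Q y * g y * w i true * hw j - 2 * Q y * g y * w j true * hw i
        | linear_combination 2 * Q y * g y * w j true * hw i - 2 * Q y * g y * w i true * hw j
        | linear_combination Q y * g y * w i true * hw j - Q y * g y * w j true * hw i
        | linear_combination Q y * g y * w j true * hw i - Q y * g y * w i true * hw j
      · norm_num
        first
        | linear_combination 2 * Q y * g y * w i true * hw j - 2 * Q y * g y * w j true * hw i
        | linear_combination 2 * Q y * g y * w j true * hw i - 2 * Q y * g y * w i true * hw j
        | linear_combination Q y * g y * w i true * hw j - Q y * g y * w j true * hw i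
        | linear_combination Q y * g y * w j true * hw i - Q y * g y * w i true * hw j
      · norm_num
    have := hkey (y i) (y j)
    rw [hW y]
    simpa only [hA] using this
  calc ∑ y : Fin n → Bool, (∏ k, w k (y k)) * (A y * g y)
      = (w i true - w j true) * (U / 2) / 2 := by
        rw [← stepB]
        have := stepA
        rw [stepB] at this
        linarith
    _ = (w i true - w j true) * ∑ y : Fin n → Bool, (∏ k, w k (y k)) * g y := by
        rw [stepW]; ring

/-- under mutual independence of the coordinates, the ordering of the
expected AUC weights matches the ordering of the marginal means. -/
theorem alpha_expectation_order_of_independent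
    {n : ℕ} (P : PMF (Fin n → Bool))
    (hind : ∀ y : Fin n → Bool,
      (P y).toReal = ∏ i, (if y i then margin P i else 1 - margin P i))
    (i j : Fin n) (hij : i ≠ j) :
    pexp P (fun y => alpha y i) - pexp P (fun y => alpha y j) =
      (margin P i - margin P j) *
        pexp P (fun y =>
          1 / ((1 + ((((n - 2 : ℕ) : ℝ)) - ∑ k ∈ (Finset.univ.erase i).erase j,
              (if y k then (1 : ℝ) else 0))) *
            (1 + ∑ k ∈ (Finset.univ.erase i).erase j, (if y k then (1 : ℝ) else 0)))) ∧
    (pexp P (fun y => alpha y i) ≤ pexp P (fun y => alpha y j) ↔ margin P i ≤ margin P j) := by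
  classical
  have hjmem : j ∈ Finset.univ.erase i := Finset.mem_erase.2 ⟨hij.symm, Finset.mem_univ j⟩
  set S : Finset (Fin n) := (Finset.univ.erase i).erase j with hS
  have hn2 : 2 ≤ n := by
    rcases n with _ | _ | n
    · exact absurd i.isLt (by omega)
    · have hi := i.isLt; have hj := j.isLt
      exact absurd (Fin.ext (by omega)) hij
    · omega
  have hcard : S.card = n - 2 := by
    rw [hS, Finset.card_erase_of_mem hjmem, Finset.card_erase_of_mem (Finset.mem_univ i),
      Finset.card_univ, Fintype.card_fin]
    omega
  set g : (Fin n → Bool) → ℝ := fun y =>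
    1 / ((1 + ((((n - 2 : ℕ) : ℝ)) - ∑ k ∈ S, (if y k then (1 : ℝ) else 0))) *
      (1 + ∑ k ∈ S, (if y k then (1 : ℝ) else 0))) with hg
  set w : Fin n → Bool → ℝ := fun k b => if b then margin P k else 1 - margin P k with hwdef
  have hw : ∀ k, w k true + w k false = 1 := by intro k; simp [hwdef]
  have hki : ∀ k ∈ S, k ≠ i := fun k hk => (Finset.mem_erase.1 (Finset.mem_erase.1 hk).2).1
  have hkj : ∀ k ∈ S, k ≠ j := fun k hk => (Finset.mem_erase.1 hk).1
  -- sums over S are invariant under updates at i and j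
  have hsum_upd : ∀ (y : Fin n → Bool) (a : Fin n) (b : Bool), (a = i ∨ a = j) →
      (∑ k ∈ S, (if (Function.update y a b) k then (1:ℝ) else 0))
        = ∑ k ∈ S, (if y k then (1:ℝ) else 0) := by
    intro y a b ha
    refine Finset.sum_congr rfl fun k hk => ?_
    have : k ≠ a := by rcases ha with rfl | rfl; exacts [hki k hk, hkj k hk]
    rw [Function.update_of_ne this]
  have hgi : ∀ y b, g (Function.update y i b) = g y := by
    intro y b; simp only [hg]; rw [hsum_upd y i b (Or.inl rfl)]
  have hgj : ∀ y b, g (Function.update y j b) = g y := by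
    intro y b; simp only [hg]; rw [hsum_upd y j b (Or.inr rfl)]
  -- bound on the natural-number count
  have hmN_le : ∀ y : Fin n → Bool, (∑ k ∈ S, if y k then 1 else 0 : ℕ) ≤ n - 2 := by
    intro y
    calc (∑ k ∈ S, if y k then 1 else 0 : ℕ) ≤ ∑ k ∈ S, 1 := by
          refine Finset.sum_le_sum fun k _ => ?_; split <;> omega
      _ = S.card := by simp
      _ = n - 2 := hcard
  have hn1split : ∀ y : Fin n → Bool,
      n1 y = (if y i then 1 else 0) + ((if y j then 1 else 0) +
        ∑ k ∈ S, if y k then 1 else 0) := by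
    intro y
    rw [n1, ← Finset.add_sum_erase Finset.univ _ (Finset.mem_univ i),
      ← Finset.add_sum_erase (Finset.univ.erase i) _ hjmem]
  have hmr : ∀ y : Fin n → Bool,
      (∑ k ∈ S, if y k then (1:ℝ) else 0)
        = ((∑ k ∈ S, if y k then 1 else 0 : ℕ) : ℝ) := by
    intro y; push_cast; rfl
  -- the alpha difference identity
  have hd : ∀ y : Fin n → Bool, alpha y i - alpha y j =
      ((if y i then (1:ℝ) else 0) - (if y j then 1 else 0)) * g y := by
    intro y
    set mN : ℕ := ∑ k ∈ S, if y k then 1 else 0 with hmN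
    have hle := hmN_le y
    cases hyi : y i <;> cases hyj : y j
    · simp [alpha, hyi, hyj]
    · -- y i = false, y j = true
      have hn1 : n1 y = mN + 1 := by rw [hn1split y]; simp [hyi, hyj, hmN, Nat.add_comm]
      have hcond : 0 < n1 y ∧ n1 y < n := by omega
      have h0 : ((n0 y : ℕ) : ℝ) = 1 + ((((n - 2 : ℕ) : ℝ)) - (mN : ℝ)) := by
        rw [n0, hn1, Nat.cast_sub (by omega), Nat.cast_sub (by omega)]
        push_cast; ring
      have h1 : ((n1 y : ℕ) : ℝ) = 1 + (mN : ℝ) := by rw [hn1]; push_cast; ring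
      simp only [alpha, hyi, hyj, if_pos hcond, hg]
      rw [hmr y, ← hmN, h0, h1]
      ring
    · -- y i = true, y j = false
      have hn1 : n1 y = mN + 1 := by rw [hn1split y]; simp [hyi, hyj, hmN, Nat.add_comm]
      have hcond : 0 < n1 y ∧ n1 y < n := by omega
      have h0 : ((n0 y : ℕ) : ℝ) = 1 + ((((n - 2 : ℕ) : ℝ)) - (mN : ℝ)) := by
        rw [n0, hn1, Nat.cast_sub (by omega), Nat.cast_sub (by omega)]
        push_cast; ring
      have h1 : ((n1 y : ℕ) : ℝ) = 1 + (mN : ℝ) := by rw [hn1]; push_cast; ring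
      simp only [alpha, hyi, hyj, if_pos hcond, hg]
      rw [hmr y, ← hmN, h0, h1]
      ring
    · simp [alpha, hyi, hyj]
  -- main identity
  have hmain : pexp P (fun y => alpha y i) - pexp P (fun y => alpha y j)
      = (margin P i - margin P j) * pexp P g := by
    have hL : pexp P (fun y => alpha y i) - pexp P (fun y => alpha y j)
        = ∑ y : Fin n → Bool, (∏ k, w k (y k)) *
            (((if y i then (1:ℝ) else 0) - (if y j then 1 else 0)) * g y) := by
      rw [pexp, pexp, ← Finset.sum_sub_distrib]
      refine Finset.sum_congr rfl fun y _ => ?_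
      rw [← mul_sub, hd y, hind y]
    have hR : pexp P g = ∑ y : Fin n → Bool, (∏ k, w k (y k)) * g y := by
      rw [pexp]
      refine Finset.sum_congr rfl fun y _ => by rw [hind y]
    rw [hL, hR, key_sum i j hij w hw g hgi hgj]
    have : w i true = margin P i := by simp [hwdef]
    have : w j true = margin P j := by simp [hwdef]
    simp [hwdef]
  -- positivity of the expectation factor
  have hgpos : ∀ y : Fin n → Bool, 0 < g y := by
    intro y
    have h1 : (0:ℝ) ≤ ∑ k ∈ S, (if y k then (1:ℝ) else 0) := by
      refine Finset.sum_nonneg fun k _ => ?_; split <;> norm_num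
    have h2 : (∑ k ∈ S, (if y k then (1:ℝ) else 0)) ≤ (((n - 2 : ℕ) : ℝ)) := by
      rw [hmr y]
      exact_mod_cast hmN_le y
    have : (0:ℝ) < (1 + ((((n - 2 : ℕ) : ℝ)) - ∑ k ∈ S, (if y k then (1:ℝ) else 0))) *
        (1 + ∑ k ∈ S, (if y k then (1:ℝ) else 0)) := by nlinarith
    simp only [hg]
    positivity
  have hsum1 : ∑ y : Fin n → Bool, ((P y).toReal) = 1 := by
    have h := P.tsum_coe
    rw [tsum_fintype] at h
    have := ENNReal.toReal_sum (s := Finset.univ) (f := fun y : Fin n → Bool => P y)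
      (fun y _ => PMF.apply_ne_top P y)
    rw [h] at this
    simpa using this.symm
  have hpos : 0 < pexp P g := by
    rw [pexp]
    have hex : ∃ y : Fin n → Bool, (P y).toReal ≠ 0 := by
      by_contra hcon
      push_neg at hcon
      rw [Finset.sum_congr rfl (fun y _ => hcon y)] at hsum1
      simp at hsum1
    obtain ⟨y₀, hy₀⟩ := hex
    refine Finset.sum_pos' (fun y _ => mul_nonneg ENNReal.toReal_nonneg (hgpos y).le)
      ⟨y₀, Finset.mem_univ y₀, ?_⟩
    exact mul_pos (lt_of_le_of_ne ENNReal.toReal_nonneg (Ne.symm hy₀)) (hgpos y₀)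
  refine ⟨hmain, ?_⟩
  constructor <;> intro h
  · nlinarith [hmain, hpos]
  · nlinarith [hmain, hpos]
end

section
/- Let s : 𝒴 × 𝒰 → ℝ be a T-proper scoring function for a family 𝓕 of distributions on 𝒴, i.e., for all P ∈ 𝓕 and all u ∈ 𝒰, E_P[s(Y, u)] ≤ E_P[s(Y, T(P))]. Let 𝓕_XY be a family of joint distributions for (X, Y) with X taking values in a space 𝒳, such that for each P_XY ∈ 𝓕_XY there exists a family of conditional distributions {P_{Y|X=x}}_x each belonging to 𝓕. Then the mapping form s⃗((x,y), f) = s(y, f(x)), defined for f : 𝒳 → 𝒰, is T⃗-proper for 𝓕_XY: for every P_XY ∈ 𝓕_XY and every f : 𝒳 → 𝒰, E[s⃗((X,Y), f)] ≤ E[s⃗((X,Y), T⃗(P_XY))], where T⃗(P_XY)(x) = T(P_{Y|X=x}). -/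
open MeasureTheory ProbabilityTheory

/-- if `s` is a `T`-proper scoring function for a family `F` of distributions
on the outcome space `Y`, and the joint distribution of `(X, Y)` disintegrates into a
marginal `PX` and conditional distributions `κ x` each belonging to `F`, then the mapping
form `s⃗((x,y), f) = s(y, f(x))` is `T⃗`-proper, where `T⃗(P_XY)(x) = T(P_{Y|X=x}) = T(κ x)`. -/
theorem mapping_form_is_proper
    {X Y U : Type*} [MeasurableSpace X] [MeasurableSpace Y]
    (F : Set (Measure Y)) (hFprob : ∀ P ∈ F, IsProbabilityMeasure P)
    (T : Measure Y → U) (s : Y → U → ℝ)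
    (hproper : ∀ P ∈ F, ∀ u : U, (∫ y, s y u ∂P) ≤ ∫ y, s y (T P) ∂P)
    (PX : Measure X) [IsProbabilityMeasure PX]
    (κ : Kernel X Y) [IsMarkovKernel κ]
    (hκF : ∀ x, κ x ∈ F)
    (f : X → U)
    (hint_f : Integrable (fun p : X × Y => s p.2 (f p.1)) (PX.compProd κ))
    (hint_T : Integrable (fun p : X × Y => s p.2 (T (κ p.1))) (PX.compProd κ)) :
    (∫ p, s p.2 (f p.1) ∂(PX.compProd κ)) ≤ ∫ p, s p.2 (T (κ p.1)) ∂(PX.compProd κ) := by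
  rw [Measure.integral_compProd hint_f, Measure.integral_compProd hint_T]
  rw [Measure.compProd] at hint_f hint_T
  exact integral_mono hint_f.integral_compProd hint_T.integral_compProd
    (fun x => hproper (κ x) (hκF x) (f x))
end

section
/- Let y ∈ {0,1}^n with 0 < n_1(y) < n, and let ≾ be a total preorder on {1,...,n} that perfectly separates the outcomes, i.e., i ≺ j whenever y_i = 0 and y_j = 1. Then AUC(y, ≾) = 1, the maximal possible value; more generally, for any rank-sum scoring function s(y, ≾) = g(y) + Σ_i σ_i(y)·ρ_i(≾) with σ_i(y) = σ_j(y) whenever y_i = y_j and σ_i(y) ≥ σ_j(y) whenever y_i > y_j, such a separating ≾ achieves the maximum of s(y, ·) over all total preorders. -/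
open scoped BigOperators

open TotalPreorder

section AuxLemmas

variable {n : ℕ}

private lemma sum_indicator_rho (q : TotalPreorder n) (y : Fin n → Bool) :
    ∑ i, (if y i then (1:ℝ) else 0) * rho q i
      = ∑ i, ∑ j, ((if y i then (1:ℝ) else 0) - (if y j then (1:ℝ) else 0))
          * (if q.rel j i then (1:ℝ) else 0) := by
  have h : (∑ i, ∑ j, (if y i then (1:ℝ) else 0) * (if q.rel i j then (1:ℝ) else 0))
      = ∑ i, ∑ j, (if y j then (1:ℝ) else 0) * (if q.rel j i then (1:ℝ) else 0) :=
    Finset.sum_comm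
  simp only [rho, Finset.mul_sum, mul_sub, sub_mul, Finset.sum_sub_distrib, h]

private lemma sum_indicator_cast (y : Fin n → Bool) :
    (∑ i, (if y i then (1:ℝ) else 0)) = (n1 y : ℝ) := by
  rw [n1, Nat.cast_sum]
  refine Finset.sum_congr rfl fun i _ => ?_
  by_cases h : y i <;> simp [h]

private lemma S_le (q : TotalPreorder n) (y : Fin n → Bool) :
    ∑ i, (if y i then (1:ℝ) else 0) * rho q i
      ≤ (n1 y : ℝ) * ((n:ℝ) - (n1 y : ℝ)) := by
  rw [sum_indicator_rho]
  have hb : ∀ i _j : Fin n, True := fun _ _ => trivial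
  calc ∑ i, ∑ j, ((if y i then (1:ℝ) else 0) - (if y j then (1:ℝ) else 0))
          * (if q.rel j i then (1:ℝ) else 0)
      ≤ ∑ i, ∑ j, (if y i then (1:ℝ) else 0) * (1 - (if y j then (1:ℝ) else 0)) := by
        refine Finset.sum_le_sum fun i _ => Finset.sum_le_sum fun j _ => ?_
        cases hyi : y i <;> cases hyj : y j <;> cases hr : q.rel j i <;>
          simp [hyi, hyj, hr]
    _ = (n1 y : ℝ) * ((n:ℝ) - (n1 y : ℝ)) := by
        rw [← Finset.sum_mul_sum]
        rw [sum_indicator_cast, Finset.sum_sub_distrib, sum_indicator_cast]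
        simp

private lemma S_eq_s18 (p : TotalPreorder n) (y : Fin n → Bool)
    (hsep : ∀ i j, y i = false → y j = true → p.rel i j = true ∧ p.rel j i = false) :
    ∑ i, (if y i then (1:ℝ) else 0) * rho p i
      = (n1 y : ℝ) * ((n:ℝ) - (n1 y : ℝ)) := by
  rw [sum_indicator_rho]
  calc ∑ i, ∑ j, ((if y i then (1:ℝ) else 0) - (if y j then (1:ℝ) else 0))
          * (if p.rel j i then (1:ℝ) else 0)
      = ∑ i, ∑ j, (if y i then (1:ℝ) else 0) * (1 - (if y j then (1:ℝ) else 0)) := by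
        refine Finset.sum_congr rfl fun i _ => Finset.sum_congr rfl fun j _ => ?_
        cases hyi : y i <;> cases hyj : y j
        · simp
        · have := (hsep i j hyi hyj).2
          simp [hyi, hyj, this]
        · have := (hsep j i hyj hyi).1
          simp [hyi, hyj, this]
        · simp [hyi, hyj]
    _ = (n1 y : ℝ) * ((n:ℝ) - (n1 y : ℝ)) := by
        rw [← Finset.sum_mul_sum]
        rw [sum_indicator_cast, Finset.sum_sub_distrib, sum_indicator_cast]
        simp

private lemma sum_rho_zero (q : TotalPreorder n) : ∑ i, rho q i = 0 := by
  have h : (∑ i, ∑ j, (if q.rel i j then (1:ℝ) else 0))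
      = ∑ i, ∑ j, (if q.rel j i then (1:ℝ) else 0) := Finset.sum_comm
  simp only [rho, Finset.sum_sub_distrib, h, sub_self]

end AuxLemmas

/-- a perfectly separating preorder attains `AUC = 1`, the maximal value,
and more generally maximises any rank-sum score with monotone weights. -/
theorem separating_preorder_maximises
    {n : ℕ} (y : Fin n → Bool) (h1 : 0 < n1 y) (h2 : n1 y < n)
    (p : TotalPreorder n)
    (hsep : ∀ i j, y i = false → y j = true → p.rel i j = true ∧ p.rel j i = false)
    (g : (Fin n → Bool) → ℝ) (sigma : Fin n → (Fin n → Bool) → ℝ)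
    (hsig_eq : ∀ i j, y i = y j → sigma i y = sigma j y)
    (hsig_mono : ∀ i j, y i = true → y j = false → sigma j y ≤ sigma i y) :
    AUC y p = 1 ∧ (∀ q : TotalPreorder n, AUC y q ≤ 1) ∧
      (∀ q : TotalPreorder n,
        g y + ∑ i, sigma i y * rho q i ≤ g y + ∑ i, sigma i y * rho p i) := by
  have hn1 : (0:ℝ) < (n1 y : ℝ) := by exact_mod_cast h1
  have hlt : (n1 y : ℝ) < (n:ℝ) := by exact_mod_cast h2
  have hdiff : (0:ℝ) < (n:ℝ) - (n1 y : ℝ) := by linarith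
  have hn0cast : (n0 y : ℝ) = (n:ℝ) - (n1 y : ℝ) := by
    rw [n0, Nat.cast_sub h2.le]
  have hden : (0:ℝ) < (n0 y : ℝ) * (n1 y : ℝ) := by rw [hn0cast]; positivity
  have halpha : ∀ q : TotalPreorder n, ∑ i, alpha y i * rho q i
      = ((n0 y : ℝ) * (n1 y : ℝ))⁻¹ * ∑ i, (if y i then (1:ℝ) else 0) * rho q i := by
    intro q
    rw [Finset.mul_sum]
    refine Finset.sum_congr rfl fun i _ => ?_
    rw [alpha, if_pos ⟨h1, h2⟩]
    ring
  have hSp := S_eq_s18 p y hsep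
  have hAUCp : AUC y p = 1 := by
    rw [AUC, halpha, hSp, hn0cast]
    field_simp
    ring
  refine ⟨hAUCp, fun q => ?_, fun q => ?_⟩
  · rw [AUC, halpha]
    have hle : ((n0 y : ℝ) * (n1 y : ℝ))⁻¹
        * (∑ i, (if y i then (1:ℝ) else 0) * rho q i) ≤ 1 := by
      rw [inv_mul_le_iff₀ hden, mul_one, hn0cast]
      have := S_le q y
      nlinarith
    linarith
  · obtain ⟨i0, hi0⟩ : ∃ i, y i = true := by
      by_contra h
      push_neg at h
      have hz : n1 y = 0 := by
        rw [n1]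
        refine Finset.sum_eq_zero fun i _ => ?_
        simp [h i]
      omega
    obtain ⟨j0, hj0⟩ : ∃ j, y j = false := by
      by_contra h
      push_neg at h
      have hz : n1 y = n := by
        rw [n1]
        have : ∀ i : Fin n, y i = true := fun i => by
          cases hyi : y i
          · exact absurd hyi (h i)
          · rfl
        simp [this]
      omega
    have hab : 0 ≤ sigma i0 y - sigma j0 y := by
      have := hsig_mono i0 j0 hi0 hj0; linarith
    have hdecomp : ∀ r : TotalPreorder n, ∑ i, sigma i y * rho r i
        = (sigma i0 y - sigma j0 y) * (∑ i, (if y i then (1:ℝ) else 0) * rho r i)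
          + sigma j0 y * ∑ i, rho r i := by
      intro r
      have hpt : ∀ i, sigma i y
          = (sigma i0 y - sigma j0 y) * (if y i then (1:ℝ) else 0) + sigma j0 y := by
        intro i
        cases hyi : y i
        · rw [hsig_eq i j0 (by rw [hyi, hj0])]; simp
        · rw [hsig_eq i i0 (by rw [hyi, hi0])]; simp
      calc ∑ i, sigma i y * rho r i
          = ∑ i, ((sigma i0 y - sigma j0 y) * ((if y i then (1:ℝ) else 0) * rho r i)
              + sigma j0 y * rho r i) := by
            refine Finset.sum_congr rfl fun i _ => ?_
            rw [hpt i]; ring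
        _ = _ := by
            rw [Finset.sum_add_distrib, ← Finset.mul_sum, ← Finset.mul_sum]
    have hS : ∑ i, (if y i then (1:ℝ) else 0) * rho q i
        ≤ ∑ i, (if y i then (1:ℝ) else 0) * rho p i := by
      rw [hSp]; exact S_le q y
    have := mul_le_mul_of_nonneg_left hS hab
    rw [hdecomp q, hdecomp p, sum_rho_zero, sum_rho_zero]
    linarith
end
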